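/- An independent set F in a graph G is a free independent set (i.e., F can be extended to at least two distinct maximal independent sets of G) if and only if there exists an edge uv of G such that (N(u) ∪ N(v)) ∩ F = ∅. -/

import Mathlib

open SimpleGraph

variable {V : Type*} {W : Type*}

/-- An independent set in a simple graph. -/
def IsIndep (G : SimpleGraph V) (s : Set V) : Prop :=
  ∀ ⦃u⦄, u ∈ s → ∀ ⦃v⦄, v ∈ s → ¬ G.Adj u v

/-- A maximal independent set. -/
def IsMaxIndep (G : SimpleGraph V) (s : Set V) : Prop :=
  IsIndep G s ∧ ∀ t : Set V, IsIndep G t → s ⊆ t → s = t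

/-- A free independent set: an independent set contained in at least two
distinct maximal independent sets. -/
def IsFreeIndep (G : SimpleGraph V) (s : Set V) : Prop :=
  IsIndep G s ∧ ∃ M₁ M₂ : Set V, IsMaxIndep G M₁ ∧ IsMaxIndep G M₂ ∧ M₁ ≠ M₂ ∧ s ⊆ M₁ ∧ s ⊆ M₂

/-- A free graph: every vertex lies in some free independent set. -/
def IsFreeGraph (G : SimpleGraph V) : Prop :=
  ∀ v : V, ∃ F : Set V, IsFreeIndep G F ∧ v ∈ F

/-- A partition of the vertices into `t` free independent sets. -/
def FreePartition (G : SimpleGraph V) (t : ℕ) : Prop :=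
  ∃ P : Fin t → Set V, (∀ i, IsFreeIndep G (P i)) ∧ ∀ v : V, ∃! i, v ∈ P i

/-- The free chromatic number `φ(G)` (`∞` if no free partition exists). -/
noncomputable def freeChrom (G : SimpleGraph V) : ℕ∞ :=
  sInf {t : ℕ∞ | ∃ n : ℕ, t = n ∧ FreePartition G n}

/-- The chromatic number as a natural number. -/
noncomputable def chromNum (G : SimpleGraph V) : ℕ :=
  sInf {k : ℕ | G.Colorable k}

/-- The circular complete graph `K_{n/d}`. -/
def circKG (n d : ℕ) : SimpleGraph (Fin n) where
  Adj i j := i ≠ j ∧ d ≤ ((i : ℤ) - (j : ℤ)).natAbs ∧ ((i : ℤ) - (j : ℤ)).natAbs ≤ n - d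
  symm := ⟨by
    intro i j h
    obtain ⟨h1, h2, h3⟩ := h
    refine ⟨h1.symm, ?_, ?_⟩ <;> omega⟩
  loopless := ⟨by intro i h; exact h.1 rfl⟩

/-- The circular chromatic number, as a real number. -/
noncomputable def circChrom (G : SimpleGraph V) : ℝ :=
  sInf {x : ℝ | ∃ n d : ℕ, 0 < d ∧ Nat.gcd n d = 1 ∧ x = (n : ℝ) / d ∧
    Nonempty (G →g circKG n d)}

/-- The Mycielskian of a graph. -/
def mycielskian (G : SimpleGraph V) : SimpleGraph (Option (V ⊕ V)) where
  Adj x y := match x, y with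
    | some (Sum.inl u), some (Sum.inl v) => G.Adj u v
    | some (Sum.inl u), some (Sum.inr v) => G.Adj u v
    | some (Sum.inr u), some (Sum.inl v) => G.Adj u v
    | some (Sum.inr _), none => True
    | none, some (Sum.inr _) => True
    | _, _ => False
  symm := ⟨by
    rintro (_ | (u | u)) (_ | (v | v)) h <;> simp_all <;> exact G.adj_symm h⟩
  loopless := ⟨by
    rintro (_ | (u | u)) h <;> simp_all⟩

/-- Vertex type of the iterated Mycielskian. -/
def MycV (V : Type u) : ℕ → Type u
  | 0 => V
  | t + 1 => Option (MycV V t ⊕ MycV V t)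

/-- The `t`-fold iterated Mycielskian. -/
def mycIter (G : SimpleGraph V) : ∀ t : ℕ, SimpleGraph (MycV V t)
  | 0 => G
  | t + 1 => mycielskian (mycIter G t)

/-- The maximum size of a free independent set. -/
noncomputable def freeAlpha (G : SimpleGraph V) : ℕ :=
  sSup {k : ℕ | ∃ F : Set V, IsFreeIndep G F ∧ k = F.ncard}

/-- The independence number. -/
noncomputable def alphaNum (G : SimpleGraph V) : ℕ :=
  sSup {k : ℕ | ∃ S : Set V, IsIndep G S ∧ k = S.ncard}

/-- `d(G)`: the minimum over edges `uv` of `|N(u) ∪ N(v)|`. -/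
noncomputable def dMin (G : SimpleGraph V) : ℕ :=
  sInf {k : ℕ | ∃ u v : V, G.Adj u v ∧ k = (G.neighborSet u ∪ G.neighborSet v).ncard}

/-- An `(a,b)`-free coloring of `G` with `t` colors. -/
def ABFree (G : SimpleGraph V) (a b t : ℕ) : Prop :=
  ∃ (P : Fin t → Set V) (e : Fin (t - a) → V × V),
    (∀ v : V, ∃! i, v ∈ P i) ∧
    (∀ i, IsIndep G (P i)) ∧
    (∀ i : Fin (t - a), IsFreeIndep G (P (Fin.castLE (Nat.sub_le t a) i))) ∧
    (∀ i : Fin (t - a), G.Adj (e i).1 (e i).2 ∧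
      (G.neighborSet (e i).1 ∪ G.neighborSet (e i).2) ∩ P (Fin.castLE (Nat.sub_le t a) i) = ∅) ∧
    (∀ v : V, Set.ncard {i : Fin (t - a) | v = (e i).1 ∨ v = (e i).2} ≤ b)

/-- The `(a,b)`-free chromatic number `φ^a_b(G)`. -/
noncomputable def abFreeChrom (G : SimpleGraph V) (a b : ℕ) : ℕ∞ :=
  sInf {t : ℕ∞ | ∃ n : ℕ, t = n ∧ ABFree G a b n}

/-- The Kneser graph `KG(m,n)`. -/
def kneser (m n : ℕ) : SimpleGraph {A : Finset (Fin m) // A.card = n} where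
  Adj A B := A ≠ B ∧ Disjoint A.1 B.1
  symm := ⟨fun A B h => ⟨h.1.symm, h.2.symm⟩⟩
  loopless := ⟨fun A h => h.1 rfl⟩

/-- The generalized Kneser graph `KG(m,n,s)`. -/
def genKneser (m n s : ℕ) : SimpleGraph {A : Finset (Fin m) // A.card = n} where
  Adj A B := A ≠ B ∧ (A.1 ∩ B.1).card ≤ s
  symm := ⟨fun A B h => ⟨h.1.symm, by rw [Finset.inter_comm]; exact h.2⟩⟩
  loopless := ⟨fun A h => h.1 rfl⟩

/-- 2-stability of a subset of `[m]`. -/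
def TwoStable (m : ℕ) (A : Finset (Fin m)) : Prop :=
  ∀ x ∈ A, ∀ y ∈ A, x ≠ y →
    2 ≤ ((x : ℤ) - (y : ℤ)).natAbs ∧ ((x : ℤ) - (y : ℤ)).natAbs ≤ m - 2

/-- The Schrijver graph `SG(m,n)`. -/
def schrijver (m n : ℕ) :
    SimpleGraph {A : Finset (Fin m) // A.card = n ∧ TwoStable m A} where
  Adj A B := A ≠ B ∧ Disjoint A.1 B.1
  symm := ⟨fun A B h => ⟨h.1.symm, h.2.symm⟩⟩
  loopless := ⟨fun A h => h.1 rfl⟩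

/-!
If `F` lies in two distinct maximal independent sets `A` and `B`, pick `u ∈ A \ B`; by maximality
of `B` it has a neighbour `v ∈ B`. No vertex of `F ⊆ A ∩ B` is adjacent to `u ∈ A` or to `v ∈ B`.
Conversely, if the edge `uv` sees nothing of `F`, then `F ∪ {u}` and `F ∪ {v}` are independent
and extend to maximal independent sets, which differ because `u` and `v` cannot lie in a common one.
-/

namespace IsIndep

variable {G : SimpleGraph V} {s : Set V}

theorem insert_iff {w : V} :
    IsIndep G (insert w s) ↔ IsIndep G s ∧ Disjoint (G.neighborSet w) s := by
  refine ⟨fun h => ⟨fun x hx y hy => h (Or.inr hx) (Or.inr hy),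
    Set.disjoint_left.2 fun x hwx hx => h (Or.inl rfl) (Or.inr hx) hwx⟩, ?_⟩
  rintro ⟨hs, hw⟩ x (rfl | hx) y (rfl | hy) hxy
  · exact hxy.ne rfl
  · exact Set.disjoint_left.1 hw hxy hy
  · exact Set.disjoint_left.1 hw hxy.symm hx
  · exact hs hx hy hxy

theorem exists_isMaxIndep_superset (hs : IsIndep G s) : ∃ M, IsMaxIndep G M ∧ s ⊆ M := by
  obtain ⟨M, hsM, hM⟩ := zorn_subset_nonempty {t : Set V | IsIndep G t}
    (fun c hc hchain _ => ⟨⋃₀ c, fun u hu v hv huv => by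
      obtain ⟨t₁, ht₁, hut⟩ := hu
      obtain ⟨t₂, ht₂, hvt⟩ := hv
      rcases hchain.total ht₁ ht₂ with h | h
      · exact hc ht₂ (h hut) hvt huv
      · exact hc ht₁ hut (h hvt) huv, fun _ => Set.subset_sUnion_of_mem⟩) s hs
  exact ⟨M, ⟨hM.1, fun t ht hMt => hM.eq_of_le ht hMt⟩, hsM⟩

theorem disjoint_neighborSet (hs : IsIndep G s) {w : V} (hw : w ∈ s) :
    Disjoint (G.neighborSet w) s :=
  (insert_iff.1 (by rwa [Set.insert_eq_of_mem hw])).2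

end IsIndep

theorem IsMaxIndep.exists_adj_of_notMem {G : SimpleGraph V} {M : Set V} (hM : IsMaxIndep G M)
    {w : V} (hw : w ∉ M) : ∃ v ∈ M, G.Adj w v := by
  by_contra! h
  have hindep : IsIndep G (insert w M) :=
    IsIndep.insert_iff.2 ⟨hM.1, Set.disjoint_left.2 fun v hwv hv => h v hv hwv⟩
  exact hw (hM.2 _ hindep (Set.subset_insert w M) ▸ Set.mem_insert w M)

theorem exists_adj_neighborSet_union_inter_eq_empty {G : SimpleGraph V} {A B F : Set V}
    (hA : IsIndep G A) (hB : IsMaxIndep G B) (hAB : ¬ A ⊆ B) (hFA : F ⊆ A) (hFB : F ⊆ B) :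
    ∃ u v : V, G.Adj u v ∧ (G.neighborSet u ∪ G.neighborSet v) ∩ F = ∅ := by
  obtain ⟨u, huA, huB⟩ := Set.not_subset.1 hAB
  obtain ⟨v, hvB, huv⟩ := hB.exists_adj_of_notMem huB
  refine ⟨u, v, huv, Set.disjoint_iff_inter_eq_empty.1 (Set.disjoint_union_left.2 ⟨?_, ?_⟩)⟩
  · exact (hA.disjoint_neighborSet huA).mono_right hFA
  · exact (hB.1.disjoint_neighborSet hvB).mono_right hFB

theorem stmt0_general {V : Type*} (G : SimpleGraph V) (F : Set V) (hF : IsIndep G F) :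
    IsFreeIndep G F ↔
      ∃ u v : V, G.Adj u v ∧ (G.neighborSet u ∪ G.neighborSet v) ∩ F = ∅ := by
  constructor
  · rintro ⟨-, M₁, M₂, hM₁, hM₂, hne, hFM₁, hFM₂⟩
    by_cases h : M₁ ⊆ M₂
    · exact exists_adj_neighborSet_union_inter_eq_empty hM₂.1 hM₁ (fun h' => hne (h.antisymm h'))
        hFM₂ hFM₁
    · exact exists_adj_neighborSet_union_inter_eq_empty hM₁.1 hM₂ h hFM₁ hFM₂
  · rintro ⟨u, v, huv, hempty⟩
    obtain ⟨hu, hv⟩ := Set.disjoint_union_left.1 (Set.disjoint_iff_inter_eq_empty.2 hempty)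
    obtain ⟨M₁, hM₁, hFM₁⟩ := (IsIndep.insert_iff.2 ⟨hF, hu⟩).exists_isMaxIndep_superset
    obtain ⟨M₂, hM₂, hFM₂⟩ := (IsIndep.insert_iff.2 ⟨hF, hv⟩).exists_isMaxIndep_superset
    refine ⟨hF, M₁, M₂, hM₁, hM₂, fun h => ?_, (Set.subset_insert u F).trans hFM₁,
      (Set.subset_insert v F).trans hFM₂⟩
    exact hM₂.1 (h ▸ hFM₁ (Set.mem_insert u F)) (hFM₂ (Set.mem_insert v F)) huv

/-- An independent set `F` is free iff some edge `uv` satisfies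
`(N(u) ∪ N(v)) ∩ F = ∅`. -/
theorem stmt0 {V : Type*} [Fintype V] (G : SimpleGraph V) (F : Set V) (hF : IsIndep G F) :
    IsFreeIndep G F ↔
      ∃ u v : V, G.Adj u v ∧ (G.neighborSet u ∪ G.neighborSet v) ∩ F = ∅ :=
  stmt0_general G F hF
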